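/- Let S be a doubly infinite sequence over a field with number wall W_{m,n}. If W_{m,n} = W_{m,n+1} = W_{m+1,n} = 0 for some m ≥ 0, then W_{m+1,n+1} = 0. (Zeros propagate to fill out square windows.) -/

import Mathlib

/-!
`W_{m,n}` is the determinant of the Toeplitz matrix `T_{m+1}(n) = (s_{i-j+n})_{0 ≤ i,j ≤ m}`.
Suppose `A = T_{m+2}(n+1)` were invertible. Take `b ≠ 0` in the kernel of its leading block
`T_{m+1}(n+1)` and `d ≠ 0` in the kernel of `T_{m+2}(n)`, whose rows `1, …, m+1` are the rows
`0, …, m` of `A`. Then `A` sends both `(b, 0)` and `d` to multiples of the last basis vector, so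
they are proportional and `d` ends in a zero. Shifted down by one place, `d` is then killed by `A`,
so `d = 0`.
-/

/-- The number wall of a doubly infinite sequence `s` over a field:
`W_{m,n} = det (s_{i-j+n})_{0 ≤ i,j ≤ m}` for `m ≥ 0`, with `W_{-1,n} = 1`
and `W_{m,n} = 0` for `m < -1`. -/
noncomputable def numberWall {K : Type*} [Field K] (s : ℤ → K) (m n : ℤ) : K :=
  if m < -1 then 0
  else if m = -1 then 1
  else Matrix.det (Matrix.of fun i j : Fin (m.toNat + 1) => s ((i : ℤ) - (j : ℤ) + n))

open Matrix

theorem Matrix.smul_eq_smul_of_mulVec_castSucc_eq_zero {R : Type*} [CommRing R]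
    [NoZeroDivisors R] {N : ℕ} {A : Matrix (Fin (N + 1)) (Fin (N + 1)) R} (hA : A.det ≠ 0)
    {x y : Fin (N + 1) → R} (hx : ∀ i : Fin N, (A *ᵥ x) i.castSucc = 0)
    (hy : ∀ i : Fin N, (A *ᵥ y) i.castSucc = 0) :
    (A *ᵥ x) (Fin.last N) • y = (A *ᵥ y) (Fin.last N) • x := by
  rw [← sub_eq_zero]
  refine eq_zero_of_mulVec_eq_zero hA (funext fun i => ?_)
  rw [mulVec_sub, mulVec_smul, mulVec_smul]
  refine Fin.lastCases ?_ (fun i => ?_) i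
  · simp [mul_comm]
  · simp [hx i, hy i]

section wallMatrix

variable {K : Type*} [Field K] (s : ℤ → K)

def wallMatrix (N : ℕ) (n : ℤ) : Matrix (Fin N) (Fin N) K :=
  of fun i j => s ((i : ℤ) - (j : ℤ) + n)

theorem numberWall_natCast (M : ℕ) (n : ℤ) :
    numberWall s M n = (wallMatrix s (M + 1) n).det := by
  rw [numberWall, if_neg (by omega), if_neg (by omega), Int.toNat_natCast, wallMatrix]

theorem wallMatrix_mulVec_snoc_zero_castSucc {N : ℕ} (n : ℤ) (v : Fin N → K) (i : Fin N) :
    (wallMatrix s (N + 1) n *ᵥ Fin.snoc v 0) i.castSucc = (wallMatrix s N n *ᵥ v) i := by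
  simp [wallMatrix, mulVec, dotProduct, Fin.sum_univ_castSucc]

theorem wallMatrix_add_one_mulVec_castSucc {N : ℕ} (n : ℤ) (v : Fin (N + 1) → K) (i : Fin N) :
    (wallMatrix s (N + 1) (n + 1) *ᵥ v) i.castSucc = (wallMatrix s (N + 1) n *ᵥ v) i.succ := by
  simp only [wallMatrix, mulVec, dotProduct, of_apply, Fin.val_castSucc, Fin.val_succ]
  congr! 3
  push_cast
  ring

theorem wallMatrix_add_one_mulVec_cons_zero {N : ℕ} (n : ℤ) (v : Fin N → K) :
    wallMatrix s (N + 1) (n + 1) *ᵥ Fin.cons 0 v = wallMatrix s (N + 1) n *ᵥ Fin.snoc v 0 := by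
  ext i
  rw [mulVec, dotProduct, Fin.sum_univ_succ, mulVec, dotProduct, Fin.sum_univ_castSucc]
  simp only [wallMatrix, of_apply, Fin.cons_zero, Fin.cons_succ, Fin.snoc_castSucc,
    Fin.snoc_last, mul_zero, zero_add, add_zero, Fin.val_succ, Fin.val_castSucc]
  congr! 3
  push_cast
  ring

theorem det_wallMatrix_succ_eq_zero {N : ℕ} {n : ℤ} (h₁ : (wallMatrix s N (n + 1)).det = 0)
    (h₂ : (wallMatrix s (N + 1) n).det = 0) : (wallMatrix s (N + 1) (n + 1)).det = 0 := by
  by_contra hA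
  obtain ⟨b, hb0, hb⟩ := exists_mulVec_eq_zero_iff.2 h₁
  obtain ⟨d, hd0, hd⟩ := exists_mulVec_eq_zero_iff.2 h₂
  set A := wallMatrix s (N + 1) (n + 1)
  have hAb : ∀ i : Fin N, (A *ᵥ Fin.snoc b 0) i.castSucc = 0 := fun i => by
    rw [wallMatrix_mulVec_snoc_zero_castSucc, hb, Pi.zero_apply]
  have hAd : ∀ i : Fin N, (A *ᵥ d) i.castSucc = 0 := fun i => by
    rw [wallMatrix_add_one_mulVec_castSucc, hd, Pi.zero_apply]
  have hAb_last : (A *ᵥ Fin.snoc b 0) (Fin.last N) ≠ 0 := fun h => by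
    have := eq_zero_of_mulVec_eq_zero hA (funext fun i => Fin.lastCases h hAb i)
    exact hb0 (funext fun j => by simpa using congrFun this j.castSucc)
  have hd_last : d (Fin.last N) = 0 := by
    simpa [hAb_last] using
      congrFun (smul_eq_smul_of_mulVec_castSucc_eq_zero hA hAb hAd) (Fin.last N)
  have hd_init : Fin.cons 0 (Fin.init d) = (0 : Fin (N + 1) → K) := by
    refine eq_zero_of_mulVec_eq_zero hA ?_
    rw [wallMatrix_add_one_mulVec_cons_zero, ← hd_last, Fin.snoc_init_self, hd]
  refine hd0 (funext fun i => Fin.lastCases hd_last (fun j => ?_) i)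
  simpa [Fin.init] using congrFun hd_init j.succ

end wallMatrix

theorem numberWall_zero_propagates_general {K : Type*} [Field K] (s : ℤ → K)
    (m n : ℤ) (hm : 0 ≤ m)
    (h2 : numberWall s m (n + 1) = 0)
    (h3 : numberWall s (m + 1) n = 0) :
    numberWall s (m + 1) (n + 1) = 0 := by
  lift m to ℕ using hm
  rw [← Nat.cast_succ, numberWall_natCast] at h3 ⊢
  rw [numberWall_natCast] at h2
  exact det_wallMatrix_succ_eq_zero s h2 h3

/-- Zeros propagate to fill out square windows. -/
theorem numberWall_zero_propagates {K : Type*} [Field K] (s : ℤ → K)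
    (m n : ℤ) (hm : 0 ≤ m)
    (h1 : numberWall s m n = 0)
    (h2 : numberWall s m (n + 1) = 0)
    (h3 : numberWall s (m + 1) n = 0) :
    numberWall s (m + 1) (n + 1) = 0 :=
  numberWall_zero_propagates_general s m n hm h2 h3
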